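/- The leftmost occurrence of a repeated formula in an ordered disjunction cannot in general be removed: for distinct atoms a and b, the theory {a × b × a, a} has exactly one equilibrium model, ⟨{a},{a}⟩, whereas the theory {b × a, a} has exactly two equilibrium models, ⟨{a},{a}⟩ and ⟨{a,b},{a,b}⟩. In particular a × b × a and b × a are not HT-equivalent. -/

import Mathlib

/-! Whenever the HT-models of a theory are exactly the ⟨H,T⟩ with `M T ⊆ H`, its equilibrium
models are the fixpoints of `M`. In both theories the atom `a` is a fact, so every HT-model has
`a ∈ H`. In `(a × b) × a` the leftmost `a` then already satisfies the ordered disjunction, so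
`M T = {a}`. In `b × a` the second option is blocked as soon as `b ∈ T`, so
`M T = insert a ({b} ∩ T)`, whose fixpoints are `{a}` and `{a, b}`. The interpretation
⟨{b}, {a, b}⟩ separates the two formulas. -/

inductive Form (α : Type) : Type
  | atom : α → Form α
  | fls  : Form α
  | and  : Form α → Form α → Form α
  | or   : Form α → Form α → Form α
  | imp  : Form α → Form α → Form α

namespace Form

variable {α : Type}

/-- ¬F abbreviates F → ⊥ -/
def neg (F : Form α) : Form α := imp F fls

/-- ⊤ abbreviates ⊥ → ⊥ -/
def tru : Form α := imp fls fls

/-- ordered disjunction F × G := F ∨ (¬F ∧ G) -/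
def ox (F G : Form α) : Form α := or F (and (neg F) G)

/-- classical satisfaction -/
def csat (T : Set α) : Form α → Prop
  | atom p  => p ∈ T
  | fls     => False
  | and F G => csat T F ∧ csat T G
  | or F G  => csat T F ∨ csat T G
  | imp F G => csat T F → csat T G

/-- here-and-there satisfaction (for interpretations ⟨H,T⟩ with H ⊆ T) -/
def htsat (H T : Set α) : Form α → Prop
  | atom p  => p ∈ H
  | fls     => False
  | and F G => htsat H T F ∧ htsat H T G
  | or F G  => htsat H T F ∨ htsat H T G
  | imp F G => (csat T F → csat T G) ∧ (¬ htsat H T F ∨ htsat H T G)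

end Form

/-- HT-equivalence: satisfied by exactly the same HT-interpretations -/
def HTEquiv {α : Type} (F G : Form α) : Prop :=
  ∀ H T : Set α, H ⊆ T → (Form.htsat H T F ↔ Form.htsat H T G)

/-- ⟨T,T⟩ is an equilibrium model of the theory Γ -/
def EqModel {α : Type} (Γ : Set (Form α)) (T : Set α) : Prop :=
  (∀ F ∈ Γ, Form.htsat T T F) ∧ ∀ H : Set α, H ⊂ T → ¬ (∀ F ∈ Γ, Form.htsat H T F)

/-- iterated ordered disjunction, associated to the left; ⊥ when empty -/
def oxList {α : Type} : List (Form α) → Form α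
  | []      => Form.fls
  | a :: as => as.foldl Form.ox a

/-- iterated disjunction, associated to the left; ⊥ when empty -/
def orList {α : Type} : List (Form α) → Form α
  | []      => Form.fls
  | a :: as => as.foldl Form.or a

/-- iterated conjunction, associated to the left; ⊤ when empty -/
def andList {α : Type} : List (Form α) → Form α
  | []      => Form.tru
  | a :: as => as.foldl Form.and a

namespace Form

variable {α : Type} {H T : Set α}

theorem csat_of_htsat (hHT : H ⊆ T) : ∀ {F : Form α}, htsat H T F → csat T F
  | atom _, h => hHT h
  | fls, h => h
  | and _ _, h => ⟨csat_of_htsat hHT h.1, csat_of_htsat hHT h.2⟩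
  | or _ _, h => h.imp (csat_of_htsat hHT) (csat_of_htsat hHT)
  | imp _ _, h => h.1

theorem htsat_ox_iff (hHT : H ⊆ T) {F G : Form α} :
    htsat H T (ox F G) ↔ htsat H T F ∨ (¬ csat T F ∧ htsat H T G) := by
  simp only [ox, neg, htsat, or_false]
  exact or_congr_right (and_congr_left fun _ => and_iff_left_of_imp (mt (csat_of_htsat hHT)))

theorem csat_ox_iff {F G : Form α} : csat T (ox F G) ↔ csat T F ∨ csat T G := by
  simp only [ox, neg, csat]
  tauto

end Form

open Form

theorem eqModel_iff_eq_of_htsat_iff {α : Type} {Γ : Set (Form α)} (M : Set α → Set α)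
    (hM : ∀ H T, H ⊆ T → ((∀ F ∈ Γ, htsat H T F) ↔ M T ⊆ H)) (T : Set α) :
    EqModel Γ T ↔ M T = T := by
  rw [EqModel, hM T T subset_rfl]
  constructor
  · rintro ⟨hMT, hmin⟩
    by_contra hne
    exact hmin (M T) (hMT.ssubset_of_ne hne) ((hM _ _ hMT).2 subset_rfl)
  · intro hMT
    exact ⟨hMT.subset, fun H hH hsat => hH.not_subset (hMT ▸ (hM H T hH.subset).1 hsat)⟩

section

variable {α : Type} (a b : α)

theorem htsat_ox_ox_theory_iff (H T : Set α) (hHT : H ⊆ T) :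
    (∀ F ∈ ({ox (ox (atom a) (atom b)) (atom a), atom a} : Set (Form α)), htsat H T F) ↔
      {a} ⊆ H := by
  simp only [Set.mem_insert_iff, Set.mem_singleton_iff, forall_eq_or_imp, forall_eq,
    Set.singleton_subset_iff, htsat_ox_iff hHT, htsat]
  tauto

theorem htsat_ox_theory_iff (H T : Set α) (hHT : H ⊆ T) :
    (∀ F ∈ ({ox (atom b) (atom a), atom a} : Set (Form α)), htsat H T F) ↔
      insert a ({b} ∩ T) ⊆ H := by
  simp only [Set.mem_insert_iff, Set.mem_singleton_iff, forall_eq_or_imp, forall_eq,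
    htsat_ox_iff hHT, htsat, csat, Set.insert_subset_iff]
  by_cases hb : b ∈ T
  · simp only [Set.singleton_inter_of_mem hb, Set.singleton_subset_iff]
    tauto
  · simp only [Set.singleton_inter_eq_empty.2 hb, Set.empty_subset]
    tauto

theorem insert_singleton_inter_eq_self_iff (T : Set α) :
    insert a ({b} ∩ T) = T ↔ T = {a} ∨ T = {a, b} := by
  by_cases hb : b ∈ T
  · rw [Set.singleton_inter_of_mem hb]
    refine ⟨fun h => Or.inr h.symm, ?_⟩
    rintro (rfl | rfl)
    · rw [Set.mem_singleton_iff.1 hb, Set.pair_eq_singleton]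
    · rfl
  · rw [Set.singleton_inter_eq_empty.2 hb, insert_empty_eq, eq_comm, iff_self_or]
    rintro rfl
    exact absurd (Set.mem_insert_of_mem a rfl) hb

end

theorem not_htEquiv_ox_ox_ox {α : Type} {a b : α} (hab : a ≠ b) :
    ¬ HTEquiv (ox (ox (atom a) (atom b)) (atom a)) (ox (atom b) (atom a)) := by
  intro h
  have hsub : ({b} : Set α) ⊆ {a, b} := by simp
  have hsat := (h {b} {a, b} hsub).2 ((htsat_ox_iff hsub).2 (Or.inl rfl))
  simp [htsat_ox_iff hsub, csat_ox_iff, htsat, csat, hab] at hsat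

theorem leftmost_occurrence_not_removable {α : Type} (a b : α) (hab : a ≠ b) :
    ({T : Set α |
        EqModel {Form.ox (Form.ox (Form.atom a) (Form.atom b)) (Form.atom a),
                 Form.atom a} T} = {{a}}) ∧
    ({T : Set α |
        EqModel {Form.ox (Form.atom b) (Form.atom a), Form.atom a} T} =
      {{a}, {a, b}}) ∧
    ¬ HTEquiv (Form.ox (Form.ox (Form.atom a) (Form.atom b)) (Form.atom a))
        (Form.ox (Form.atom b) (Form.atom a)) := by
  refine ⟨?_, ?_, not_htEquiv_ox_ox_ox hab⟩
  · ext T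
    rw [Set.mem_ofPred_eq, eqModel_iff_eq_of_htsat_iff _ (htsat_ox_ox_theory_iff a b),
      Set.mem_singleton_iff, eq_comm]
  · ext T
    rw [Set.mem_ofPred_eq, eqModel_iff_eq_of_htsat_iff _ (htsat_ox_theory_iff a b),
      insert_singleton_inter_eq_self_iff, Set.mem_insert_iff, Set.mem_singleton_iff]
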